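/- arXiv:2211.02511 — 6 statements merged into one kernel-verified Lean document; each statement's English description precedes it below -/
import Mathlib

section
/- Let q : ℝ → ℝ be continuous and τ-periodic for some τ > 0, and let w be a nontrivial solution of w'' = q·w on ℝ. If w(α) = w(β) = 0 for some α < β, then the negative part q⁻ = max(-q, 0) is not identically zero, and moreover β - α ≥ π · (max_{t ∈ [0,τ]} q⁻(t))^{-1/2}. -/
open Real Set Filter Topology

/-!
Sturm comparison with `s = sin (ω (t - α))`, where `q ≥ -ω²` on `[α, β]`. By uniqueness for the
linear ODE a nontrivial solution has only simple zeros, so up to sign `w > 0` on `(α, γ)`, `γ` being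
the next zero. If `ω (γ - α) < π`, the Wronskian `w s' - w' s` has derivative `-(ω² + q) w s ≤ 0` on
`[α, γ]` and vanishes at `α`, forcing `w' γ ≥ 0`, hence `w' γ > 0`: impossible, as `w > 0` just left
of `γ`. Taking `ω² = max q⁻` (finite by periodicity) gives the bound; if `q⁻ = 0` every `ω > 0` is
admissible, which is absurd for small `ω`.
-/

lemma lipschitzWith_snd_prodMk_mul_fst (c : ℝ) :
    LipschitzWith (max 1 ‖c‖₊) fun u : ℝ × ℝ => (u.2, c * u.1) := by
  have h := LipschitzWith.prod_snd.prodMk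
    ((lipschitzWith_smul c).comp (LipschitzWith.prod_fst (α := ℝ) (β := ℝ)))
  rw [mul_one] at h
  exact h

section Sign

variable {f : ℝ → ℝ} {f' x₀ : ℝ}

lemma HasDerivAt.eventually_nhdsGT_pos (hf : HasDerivAt f f' x₀) (hf' : 0 < f') (h₀ : f x₀ = 0) :
    ∀ᶠ x in 𝓝[>] x₀, 0 < f x := by
  filter_upwards [nhdsGT_le_nhdsNE x₀ <|
    (hasDerivAt_iff_tendsto_slope.mp hf).eventually (eventually_gt_nhds hf'),
    self_mem_nhdsWithin] with x hslope hx
  exact pos_of_slope_pos hx hslope h₀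

lemma HasDerivAt.eventually_nhdsLT_neg (hf : HasDerivAt f f' x₀) (hf' : 0 < f') (h₀ : f x₀ = 0) :
    ∀ᶠ x in 𝓝[<] x₀, f x < 0 := by
  filter_upwards [nhdsLT_le_nhdsNE x₀ <|
    (hasDerivAt_iff_tendsto_slope.mp hf).eventually (eventually_gt_nhds hf'),
    self_mem_nhdsWithin] with x hslope hx
  exact neg_of_slope_pos hx hslope h₀

end Sign

lemma exists_zero_forall_pos_of_eventually_pos {w : ℝ → ℝ} {α β : ℝ}
    (hw : ContinuousOn w (Icc α β)) (hαβ : α < β) (hpos : ∀ᶠ t in 𝓝[>] α, 0 < w t)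
    (hwβ : w β = 0) : ∃ γ ∈ Ioc α β, w γ = 0 ∧ ∀ t ∈ Ioo α γ, 0 < w t := by
  obtain ⟨u, hαu, hu⟩ := mem_nhdsGT_iff_exists_Ioc_subset.mp (hpos.and (Ioo_mem_nhdsGT hαβ))
  obtain ⟨hwu, -, huβ⟩ := hu ⟨hαu, le_rfl⟩
  set S := Icc u β ∩ w ⁻¹' {0}
  have hS : IsCompact S := isCompact_Icc.of_isClosed_subset
    ((hw.mono (Icc_subset_Icc_left hαu.le)).preimage_isClosed_of_isClosed isClosed_Icc
      isClosed_singleton) inter_subset_left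
  have hβS : β ∈ S := ⟨⟨huβ.le, le_rfl⟩, hwβ⟩
  obtain ⟨⟨huγ, hγβ⟩, hwγ⟩ : sInf S ∈ S := hS.sInf_mem ⟨β, hβS⟩
  refine ⟨sInf S, ⟨hαu.trans_le huγ, hγβ⟩, hwγ, fun t ⟨hαt, htγ⟩ => ?_⟩
  rcases le_or_gt t u with htu | hut
  · exact (hu ⟨hαt, htu⟩).1
  by_contra! hwt
  obtain ⟨z, hz, hwz⟩ := intermediate_value_Icc' hut.le
    (hw.mono (Icc_subset_Icc hαu.le (htγ.le.trans hγβ))) ⟨hwt, hwu.le⟩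
  exact (csInf_le hS.bddBelow ⟨⟨hz.1, hz.2.trans (htγ.le.trans hγβ)⟩, hwz⟩).not_gt
    (hz.2.trans_lt htγ)

section SecondOrderLinear

variable {q w w' : ℝ → ℝ}

theorem eq_zero_of_eq_zero_of_deriv_eq_zero (hq : Continuous q)
    (hw : ∀ t, HasDerivAt w (w' t) t) (hw' : ∀ t, HasDerivAt w' (q t * w t) t)
    {t₀ : ℝ} (h₀ : w t₀ = 0) (h₀' : w' t₀ = 0) : w = 0 := by
  funext t
  set a := min t t₀ - 1
  set b := max t t₀ + 1
  obtain ⟨C, hC⟩ := (isCompact_Icc (a := a) (b := b)).exists_bound_of_continuousOn hq.continuousOn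
  have hlip : ∀ s ∈ Ioo a b, LipschitzOnWith (max 1 C.toNNReal)
      (fun u : ℝ × ℝ => (u.2, q s * u.1)) univ := fun s hs =>
    ((lipschitzWith_snd_prodMk_mul_fst (q s)).weaken <| max_le_max le_rfl <|
      norm_toNNReal (a := q s) ▸
        Real.toNNReal_le_toNNReal (hC s (Ioo_subset_Icc_self hs))).lipschitzOnWith
  have ht₀ : t₀ ∈ Ioo a b := ⟨by linarith [min_le_right t t₀], by linarith [le_max_right t t₀]⟩
  have ht : t ∈ Ioo a b := ⟨by linarith [min_le_left t t₀], by linarith [le_max_left t t₀]⟩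
  have := ODE_solution_unique_of_mem_Ioo hlip ht₀
    (f := fun s => (w s, w' s)) (g := fun _ => 0)
    (fun s _ => ⟨(hw s).prodMk (hw' s), trivial⟩)
    (fun s _ => ⟨by convert hasDerivAt_const s (0 : ℝ × ℝ) using 1; simp, trivial⟩)
    (by simp [h₀, h₀']) ht
  exact congrArg Prod.fst this

theorem deriv_nonneg_of_sturm_comparison (hw : ∀ t, HasDerivAt w (w' t) t)
    (hw' : ∀ t, HasDerivAt w' (q t * w t) t) {ω α γ : ℝ} (hω : 0 < ω)
    (hqω : ∀ t ∈ Ioo α γ, -ω ^ 2 ≤ q t) (hαγ : α < γ) (hγ : ω * (γ - α) < π)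
    (hwα : w α = 0) (hwγ : w γ = 0) (hpos : ∀ t ∈ Ioo α γ, 0 < w t) : 0 ≤ w' γ := by
  -- the Wronskian of `w` and the comparison solution `sin (ω * (t - α))` of `s'' = -ω ^ 2 * s`
  set W := fun t => w t * (ω * cos (ω * (t - α))) - w' t * sin (ω * (t - α))
  have hW : ∀ t, HasDerivAt W (-((ω ^ 2 + q t) * w t * sin (ω * (t - α)))) t := by
    intro t
    have hlin : HasDerivAt (fun t => ω * (t - α)) ω t := by
      simpa using ((hasDerivAt_id t).sub_const α).const_mul ω
    exact (((hw t).fun_mul (hlin.cos.const_mul ω)).fun_sub ((hw' t).fun_mul hlin.sin)).congr_deriv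
      (by ring)
  have hsin_nonneg : ∀ t ∈ Icc α γ, 0 ≤ sin (ω * (t - α)) := fun t ht =>
    sin_nonneg_of_nonneg_of_le_pi (mul_nonneg hω.le (sub_nonneg.mpr ht.1))
      (le_trans (by gcongr; exact ht.2) hγ.le)
  have hanti : AntitoneOn W (Icc α γ) := by
    refine antitoneOn_of_deriv_nonpos (convex_Icc α γ)
      (HasDerivAt.continuousOn fun t _ => hW t)
      (fun t _ => (hW t).differentiableAt.differentiableWithinAt) fun t ht => ?_
    rw [interior_Icc] at ht
    rw [(hW t).deriv, neg_nonpos]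
    exact mul_nonneg (mul_nonneg (by linarith [hqω t ht]) (hpos t ht).le)
      (hsin_nonneg t (Ioo_subset_Icc_self ht))
  have hWγ : W γ ≤ W α := hanti ⟨le_rfl, hαγ.le⟩ ⟨hαγ.le, le_rfl⟩ hαγ.le
  have hsinγ : 0 < sin (ω * (γ - α)) := sin_pos_of_pos_of_lt_pi (mul_pos hω (sub_pos.mpr hαγ)) hγ
  simp only [W, hwα, hwγ, zero_mul, zero_sub, sub_self, mul_zero, sin_zero] at hWγ
  nlinarith

theorem pi_le_mul_sub_of_deriv_pos (hq : Continuous q) (hw : ∀ t, HasDerivAt w (w' t) t)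
    (hw' : ∀ t, HasDerivAt w' (q t * w t) t) (hw₀ : w ≠ 0) {ω α β : ℝ} (hω : 0 < ω)
    (hqω : ∀ t ∈ Icc α β, -ω ^ 2 ≤ q t) (hαβ : α < β) (hwα : w α = 0) (hwβ : w β = 0)
    (hw'α : 0 < w' α) : π ≤ ω * (β - α) := by
  by_contra! hβ
  obtain ⟨γ, ⟨hαγ, hγβ⟩, hwγ, hpos⟩ := exists_zero_forall_pos_of_eventually_pos
    (HasDerivAt.continuousOn fun t _ => hw t) hαβ ((hw α).eventually_nhdsGT_pos hw'α hwα) hwβ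
  have hw'γ : 0 ≤ w' γ := deriv_nonneg_of_sturm_comparison hw hw' hω
    (fun t ht => hqω t ⟨ht.1.le, ht.2.le.trans hγβ⟩) hαγ
    (lt_of_le_of_lt (by gcongr) hβ) hwα hwγ hpos
  have hw'γ_ne : w' γ ≠ 0 := fun h => hw₀ (eq_zero_of_eq_zero_of_deriv_eq_zero hq hw hw' hwγ h)
  obtain ⟨t, hneg, htpos⟩ := (((hw γ).eventually_nhdsLT_neg (hw'γ.lt_of_ne' hw'γ_ne) hwγ).and
    (Ioo_mem_nhdsLT hαγ)).exists
  exact (hpos t htpos).not_gt hneg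

theorem pi_le_mul_sub_of_eq_zero (hq : Continuous q) (hw : ∀ t, HasDerivAt w (w' t) t)
    (hw' : ∀ t, HasDerivAt w' (q t * w t) t) (hw₀ : w ≠ 0) {ω α β : ℝ} (hω : 0 < ω)
    (hqω : ∀ t ∈ Icc α β, -ω ^ 2 ≤ q t) (hαβ : α < β) (hwα : w α = 0) (hwβ : w β = 0) :
    π ≤ ω * (β - α) := by
  rcases lt_trichotomy (w' α) 0 with hneg | hzero | hpos
  · refine pi_le_mul_sub_of_deriv_pos hq (w := -w) (w' := -w') (fun t => (hw t).neg)
      (fun t => ?_) (neg_ne_zero.mpr hw₀) hω hqω hαβ (by simp [hwα]) (by simp [hwβ])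
      (by simpa using hneg)
    simpa using (hw' t).neg
  · exact absurd (eq_zero_of_eq_zero_of_deriv_eq_zero hq hw hw' hwα hzero) hw₀
  · exact pi_le_mul_sub_of_deriv_pos hq hw hw' hw₀ hω hqω hαβ hwα hwβ hpos

end SecondOrderLinear

/-- If a nontrivial solution of `w'' = q w` (with `q` continuous and `τ`-periodic)
has two zeros `α < β`, then the negative part of `q` is not identically zero, and
`β - α ≥ π * (max_{[0,τ]} q⁻)^(-1/2)`. -/
theorem hill_zeros_spacing (q w : ℝ → ℝ) (τ α β : ℝ) (hτ : 0 < τ)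
    (hq_cont : Continuous q) (hq_per : ∀ t, q (t + τ) = q t)
    (hw : ContDiff ℝ 2 w) (hw_ne : w ≠ 0)
    (hode : ∀ t, deriv (deriv w) t = q t * w t)
    (hαβ : α < β) (hwα : w α = 0) (hwβ : w β = 0) :
    (∃ t, 0 < max (-q t) 0) ∧
      β - α ≥ Real.pi * (sSup ((fun t => max (-q t) 0) '' Set.Icc (0:ℝ) τ)) ^ (-(1/2) : ℝ) := by
  have hw₁ : ∀ t, HasDerivAt w (deriv w t) t :=
    fun t => (hw.differentiable (by norm_num) t).hasDerivAt
  have hw₂ : ∀ t, HasDerivAt (deriv w) (q t * w t) t := fun t =>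
    hode t ▸ (hw.differentiable_deriv_two t).hasDerivAt
  have hspacing : ∀ ω > 0, (∀ t ∈ Icc α β, -ω ^ 2 ≤ q t) → π ≤ ω * (β - α) :=
    fun ω hω hqω => pi_le_mul_sub_of_eq_zero hq_cont hw₁ hw₂ hw_ne hω hqω hαβ hwα hwβ
  have hneg : ∃ t, 0 < max (-q t) 0 := by
    by_contra! hq
    -- if `q ≥ 0`, every `ω > 0` is admissible, and a small one violates the spacing bound
    have := hspacing (π / (2 * (β - α))) (by positivity)
      fun t _ => by nlinarith [le_max_left (-q t) 0, hq t]
    rw [show π / (2 * (β - α)) * (β - α) = π / 2 by field_simp [(sub_pos.mpr hαβ).ne']] at this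
    linarith [pi_pos]
  refine ⟨hneg, ?_⟩
  set F := fun t => max (-q t) 0
  have hrange : F '' Icc 0 τ = range F := by
    simpa using (show Function.Periodic F τ from fun t => by simp [F, hq_per]).image_Icc hτ 0
  have hbdd : BddAbove (range F) := hrange ▸ (isCompact_Icc.image (by fun_prop)).bddAbove
  rw [hrange]
  set M := sSup (range F)
  have hM : 0 < M := hneg.elim fun t ht => ht.trans_le (le_csSup hbdd (mem_range_self t))
  have := hspacing √M (sqrt_pos.mpr hM) fun t _ => by
    rw [sq_sqrt hM.le]; linarith [le_max_left (-q t) 0, le_csSup hbdd (mem_range_self t)]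
  rw [rpow_neg hM.le, ← sqrt_eq_rpow, ← div_eq_mul_inv, ge_iff_le, div_le_iff₀ (sqrt_pos.mpr hM)]
  linarith
end

section
/- Fix a ∈ (-1,0) ∪ (0,∞) and set γ = a(1+a). Let (x,z) solve x'' = (1+2γ)x − 2x³, z' = x² − γ with x(0) = 1+a, x'(0) = 0, z(0) = 0. Then for all t, x(t)² = x'(t)² + z'(t)², i.e. x(t) = sqrt(x'(t)² + z'(t)²) since x > 0. -/
/-!
Newton's equation `x'' = V'(x)` conserves the energy `(x')² - 2 V(x)`. With
`V(y) = ((1 + 2γ) y² - y⁴) / 2` and the initial data `x(0) = 1 + a`, `x'(0) = 0` the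
energy equals `-γ²`, because `(1 + 2γ)(1 + a)² - (1 + a)⁴ = a²(1 + a)² = γ²`. The
resulting first integral `(x')² = (1 + 2γ) x² - x⁴ - γ²` is exactly `x² = (x')² + (x² - γ)²`.
-/

theorem deriv_sq_sub_two_mul_comp_eq_of_deriv_deriv_eq {x V V' : ℝ → ℝ}
    (hx : ContDiff ℝ 2 x) (hV : ∀ y, HasDerivAt V (V' y) y)
    (hode : ∀ t, deriv (deriv x) t = V' (x t)) (t : ℝ) :
    deriv x t ^ 2 - 2 * V (x t) = deriv x 0 ^ 2 - 2 * V (x 0) := by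
  have hx' : Differentiable ℝ x := hx.differentiable two_ne_zero
  have hx'' : Differentiable ℝ (deriv x) :=
    ((contDiff_succ_iff_deriv (n := 1)).mp hx).2.2.differentiable one_ne_zero
  have henergy : ∀ s, HasDerivAt (fun s => deriv x s ^ 2 - 2 * V (x s)) 0 s := fun s => by
    have h := ((hx'' s).hasDerivAt.fun_pow 2).fun_sub
      (((hV (x s)).comp s (hx' s).hasDerivAt).const_mul 2)
    exact h.congr_deriv (by rw [hode s]; push_cast; ring)
  exact is_const_of_deriv_eq_zero (fun s => (henergy s).differentiableAt)
    (fun s => (henergy s).deriv) t 0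

theorem delaunay_first_integral {a γ : ℝ} {x : ℝ → ℝ} (hγ : γ = a * (1 + a))
    (hx : ContDiff ℝ 2 x) (hode : ∀ t, deriv (deriv x) t = (1 + 2 * γ) * x t - 2 * x t ^ 3)
    (hx0 : x 0 = 1 + a) (hx'0 : deriv x 0 = 0) (t : ℝ) :
    deriv x t ^ 2 = (1 + 2 * γ) * x t ^ 2 - x t ^ 4 - γ ^ 2 := by
  have hV : ∀ y, HasDerivAt (fun y => ((1 + 2 * γ) * y ^ 2 - y ^ 4) / 2)
      ((1 + 2 * γ) * y - 2 * y ^ 3) y := fun y => by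
    have h := (((hasDerivAt_pow 2 y).const_mul (1 + 2 * γ)).fun_sub
      (hasDerivAt_pow 4 y)).div_const 2
    exact h.congr_deriv (by push_cast; ring)
  have h := deriv_sq_sub_two_mul_comp_eq_of_deriv_deriv_eq hx hV hode t
  rw [hx0, hx'0] at h
  subst hγ
  linear_combination h

theorem delaunay_isothermal_general (a γ : ℝ) (x z : ℝ → ℝ)
    (hγ : γ = a * (1 + a))
    (hx : ContDiff ℝ 2 x) (hxpos : ∀ t, 0 < x t)
    (hode : ∀ t, deriv (deriv x) t = (1 + 2 * γ) * x t - 2 * (x t) ^ 3)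
    (hx0 : x 0 = 1 + a) (hx'0 : deriv x 0 = 0)
    (hz : ∀ t, deriv z t = (x t) ^ 2 - γ) :
    ∀ t, (x t) ^ 2 = (deriv x t) ^ 2 + (deriv z t) ^ 2 ∧
      x t = Real.sqrt ((deriv x t) ^ 2 + (deriv z t) ^ 2) := by
  intro t
  have hsq : x t ^ 2 = deriv x t ^ 2 + deriv z t ^ 2 := by
    rw [hz t, delaunay_first_integral hγ hx hode hx0 hx'0 t]
    ring
  exact ⟨hsq, by rw [← hsq, Real.sqrt_sq (hxpos t).le]⟩

/-- The isothermal parametrization identity `x² = (x')² + (z')²` for Delaunay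
roulettes. -/
theorem delaunay_isothermal (a γ : ℝ) (x z : ℝ → ℝ)
    (ha : a ∈ Set.Ioo (-1 : ℝ) 0 ∪ Set.Ioi (0 : ℝ)) (hγ : γ = a * (1 + a))
    (hx : ContDiff ℝ 2 x) (hxpos : ∀ t, 0 < x t)
    (hode : ∀ t, deriv (deriv x) t = (1 + 2 * γ) * x t - 2 * (x t) ^ 3)
    (hx0 : x 0 = 1 + a) (hx'0 : deriv x 0 = 0)
    (hz : ∀ t, deriv z t = (x t) ^ 2 - γ) (hz0 : z 0 = 0) :
    ∀ t, (x t) ^ 2 = (deriv x t) ^ 2 + (deriv z t) ^ 2 ∧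
      x t = Real.sqrt ((deriv x t) ^ 2 + (deriv z t) ^ 2) :=
  delaunay_isothermal_general a γ x z hγ hx hxpos hode hx0 hx'0 hz
end

section
/- Fix a ∈ (-1,0) ∪ (0,∞), γ = a(1+a), and let x = x_a be the Delaunay profile solving x'' = (1+2γ)x − 2x³ with x(0) = 1+a, x'(0) = 0. Define p(t) = x(t)² + γ²/x(t)². Then p satisfies the ODE p'' = 2[2(1+2γ)p − 3p² + 4γ²]. -/
open Real

/-!
With `g y = y² + γ²/y²` we have `p = g ∘ x`, so `p'' = g''(x) x'² + g'(x) x''`. The energy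
`x'² - (1 + 2γ) x² + x⁴` is conserved along `x'' = (1 + 2γ) x - 2x³`, and equals `-γ²` at `t = 0`
because `γ = a(1 + a)`. Substituting `x''` and `x'²` into `p''` leaves a rational identity in `x`.
-/

/-- Conservation of energy for `x'' = F'(x)`. -/
theorem sq_deriv_sub_two_mul_eq_of_deriv_deriv_eq {x F f : ℝ → ℝ}
    (hx : Differentiable ℝ x) (hx' : Differentiable ℝ (deriv x))
    (hF : ∀ y, HasDerivAt F (f y) y) (hode : ∀ t, deriv (deriv x) t = f (x t)) (t s : ℝ) :
    deriv x t ^ 2 - 2 * F (x t) = deriv x s ^ 2 - 2 * F (x s) := by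
  have hE : ∀ t, HasDerivAt (fun t => deriv x t ^ 2 - 2 * F (x t)) 0 t := fun t => by
    have hx''t := (hx' t).hasDerivAt
    rw [hode t] at hx''t
    refine ((hx''t.fun_pow 2).fun_sub
      (((hF (x t)).comp t (hx t).hasDerivAt).const_mul 2)).congr_deriv ?_
    simp only [Nat.cast_ofNat, Nat.add_one_sub_one, pow_one]
    ring
  exact is_const_of_deriv_eq_zero (fun t => (hE t).differentiableAt) (fun t => (hE t).deriv) t s

theorem deriv_deriv_comp_eq {g g' g'' x : ℝ → ℝ}
    (hg : ∀ t, HasDerivAt g (g' (x t)) (x t)) (hg' : ∀ t, HasDerivAt g' (g'' (x t)) (x t))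
    (hx : Differentiable ℝ x) (hx' : Differentiable ℝ (deriv x)) (t : ℝ) :
    deriv (deriv fun s => g (x s)) t
      = g'' (x t) * deriv x t ^ 2 + g' (x t) * deriv (deriv x) t := by
  have hderiv : deriv (fun s => g (x s)) = fun s => g' (x s) * deriv x s :=
    funext fun s => ((hg s).comp s (hx s).hasDerivAt).deriv
  rw [hderiv]
  refine ((((hg' t).comp t (hx t).hasDerivAt).fun_mul (hx' t).hasDerivAt).congr_deriv ?_).deriv
  rw [Function.comp_apply]
  ring

theorem hasDerivAt_sq_add_div_sq (γ : ℝ) {y : ℝ} (hy : y ≠ 0) :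
    HasDerivAt (fun y => y ^ 2 + γ ^ 2 / y ^ 2) (2 * y - 2 * γ ^ 2 / y ^ 3) y := by
  refine ((hasDerivAt_pow 2 y).fun_add ((hasDerivAt_const y (γ ^ 2)).fun_div (hasDerivAt_pow 2 y)
    (pow_ne_zero 2 hy))).congr_deriv ?_
  field_simp
  norm_num
  ring

theorem hasDerivAt_two_mul_sub_div_cube (γ : ℝ) {y : ℝ} (hy : y ≠ 0) :
    HasDerivAt (fun y => 2 * y - 2 * γ ^ 2 / y ^ 3) (2 + 6 * γ ^ 2 / y ^ 4) y := by
  refine (((hasDerivAt_id' y).const_mul 2).fun_sub ((hasDerivAt_const y (2 * γ ^ 2)).fun_div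
    (hasDerivAt_pow 3 y) (pow_ne_zero 3 hy))).congr_deriv ?_
  field_simp
  norm_num
  ring

theorem delaunay_energy {a γ : ℝ} {x : ℝ → ℝ} (hγ : γ = a * (1 + a))
    (hx : Differentiable ℝ x) (hx' : Differentiable ℝ (deriv x))
    (hode : ∀ t, deriv (deriv x) t = (1 + 2 * γ) * x t - 2 * x t ^ 3)
    (hx0 : x 0 = 1 + a) (hx'0 : deriv x 0 = 0) (t : ℝ) :
    deriv x t ^ 2 = (1 + 2 * γ) * x t ^ 2 - x t ^ 4 - γ ^ 2 := by
  have hF (y : ℝ) : HasDerivAt (fun y => ((1 + 2 * γ) * y ^ 2 - y ^ 4) / 2)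
      ((1 + 2 * γ) * y - 2 * y ^ 3) y := by
    refine ((((hasDerivAt_pow 2 y).const_mul (1 + 2 * γ)).fun_sub
      (hasDerivAt_pow 4 y)).div_const 2).congr_deriv ?_
    norm_num
    ring
  have := sq_deriv_sub_two_mul_eq_of_deriv_deriv_eq hx hx' hF hode t 0
  rw [hx0, hx'0] at this
  subst hγ
  linear_combination this

theorem delaunay_potential_ode_general (a γ : ℝ) (x : ℝ → ℝ)
    (hγ : γ = a * (1 + a))
    (hx : ContDiff ℝ 2 x) (hxpos : ∀ t, 0 < x t)
    (hode : ∀ t, deriv (deriv x) t = (1 + 2 * γ) * x t - 2 * (x t) ^ 3)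
    (hx0 : x 0 = 1 + a) (hx'0 : deriv x 0 = 0) :
    ∀ t, deriv (deriv (fun s => (x s) ^ 2 + γ ^ 2 / (x s) ^ 2)) t
      = 2 * (2 * (1 + 2 * γ) * ((x t) ^ 2 + γ ^ 2 / (x t) ^ 2)
          - 3 * ((x t) ^ 2 + γ ^ 2 / (x t) ^ 2) ^ 2 + 4 * γ ^ 2) := by
  intro t
  have hxd : Differentiable ℝ x := hx.differentiable two_ne_zero
  have hxd' : Differentiable ℝ (deriv x) := hx.differentiable_deriv_two
  have hxne : x t ≠ 0 := (hxpos t).ne'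
  rw [deriv_deriv_comp_eq (g := fun y => y ^ 2 + γ ^ 2 / y ^ 2)
      (g' := fun y => 2 * y - 2 * γ ^ 2 / y ^ 3) (g'' := fun y => 2 + 6 * γ ^ 2 / y ^ 4)
      (fun s => hasDerivAt_sq_add_div_sq γ (hxpos s).ne')
      (fun s => hasDerivAt_two_mul_sub_div_cube γ (hxpos s).ne') hxd hxd' t,
    delaunay_energy hγ hxd hxd' hode hx0 hx'0 t, hode t]
  field_simp
  ring

/-- The potential `p = x² + γ²/x²` of the Jacobi operator of a Delaunay surface
satisfies `p'' = 2[2(1+2γ)p − 3p² + 4γ²]`. -/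
theorem delaunay_potential_ode (a γ : ℝ) (x : ℝ → ℝ)
    (ha : a ∈ Set.Ioo (-1 : ℝ) 0 ∪ Set.Ioi (0 : ℝ)) (hγ : γ = a * (1 + a))
    (hx : ContDiff ℝ 2 x) (hxpos : ∀ t, 0 < x t)
    (hode : ∀ t, deriv (deriv x) t = (1 + 2 * γ) * x t - 2 * (x t) ^ 3)
    (hx0 : x 0 = 1 + a) (hx'0 : deriv x 0 = 0) :
    ∀ t, deriv (deriv (fun s => (x s) ^ 2 + γ ^ 2 / (x s) ^ 2)) t
      = 2 * (2 * (1 + 2 * γ) * ((x t) ^ 2 + γ ^ 2 / (x t) ^ 2)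
          - 3 * ((x t) ^ 2 + γ ^ 2 / (x t) ^ 2) ^ 2 + 4 * γ ^ 2) :=
  delaunay_potential_ode_general a γ x hγ hx hxpos hode hx0 hx'0
end

section
/- Fix a > 0 and let w_{a,1}(t) = z_a'(t)/x_a(t), where (x_a, z_a) is the Delaunay roulette (nodary case) with period 2τ_a for x_a. Then the zero set of w_{a,1} on (0,∞) is exactly {(k + 1/2)·τ_a : k ∈ ℕ}. -/
/-!
Since `z'/x = x - γ/x`, the claim concerns the zeros of `w = x - γ/x`. Energy conservation
confines `x` to `[a, 1 + a]`, where the cubic vector field is Lipschitz, so solutions of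
`x'' = (1 + 2γ)x - 2x³` are determined by their data at one time. Hence `x` is even and symmetric
about each of its critical points; minimality of the period `2τ` then leaves no critical point in
`(0, τ)`, so `x` is injective on `[0, τ]`, with `x'(τ) = 0` and `x(τ) = a`. Because `x` lies on the
energy level `-γ²`, `γ / x(· + τ)` is again a solution, with the same data as `x` at `0`; thus
`x(t) x(t + τ) = γ`, which makes `w` antiperiodic with antiperiod `τ`. Being also even, `w` vanishes
at `τ/2`, and it is injective on `(0, τ]`.
-/

open Set Function

lemma abs_pow_three_sub_pow_three_le {p q B : ℝ} (hp : |p| ≤ B) (hq : |q| ≤ B) :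
    |p ^ 3 - q ^ 3| ≤ 3 * B ^ 2 * |p - q| := by
  have hsum : |p ^ 2 + p * q + q ^ 2| ≤ 3 * B ^ 2 := by
    rw [abs_le] at hp hq ⊢
    constructor <;> nlinarith [sq_nonneg (p + q)]
  calc |p ^ 3 - q ^ 3| = |p - q| * |p ^ 2 + p * q + q ^ 2| := by
        rw [← abs_mul]; ring_nf
    _ ≤ |p - q| * (3 * B ^ 2) := by gcongr
    _ = 3 * B ^ 2 * |p - q| := mul_comm _ _

lemma injOn_Icc_of_hasDerivAt_ne_zero {f f' : ℝ → ℝ} {a b : ℝ}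
    (hf : ∀ t, HasDerivAt f (f' t) t) (hf' : ∀ t ∈ Ioo a b, f' t ≠ 0) :
    InjOn f (Icc a b) := by
  have key : ∀ s ∈ Icc a b, ∀ t ∈ Icc a b, s < t → f s ≠ f t := by
    intro s hs t ht hst heq
    obtain ⟨u, hu, hu0⟩ := exists_hasDerivAt_eq_zero hst
      (fun u _ => (hf u).continuousAt.continuousWithinAt) heq (fun u _ => hf u)
    exact hf' u ⟨hs.1.trans_lt hu.1, hu.2.trans_le ht.2⟩ hu0
  intro s hs t ht heq
  by_contra hne
  rcases lt_or_gt_of_ne hne with h | h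
  · exact key s hs t ht h heq
  · exact key t ht s hs h heq.symm

lemma strictMonoOn_sub_div {γ : ℝ} (hγ : 0 < γ) : StrictMonoOn (fun u : ℝ => u - γ / u) (Ioi 0) :=
  fun _ hu _ _ huv => sub_lt_sub huv (div_lt_div_of_pos_left hγ hu huv)

lemma antiperiodic_sub_div_of_mul_add_eq {x : ℝ → ℝ} {τ γ : ℝ} (hx : ∀ t, x t ≠ 0)
    (h : ∀ t, x t * x (t + τ) = γ) : Antiperiodic (fun t => x t - γ / x t) τ := by
  intro t
  have hshift : x (t + τ) = γ / x t := by rw [← h t, mul_div_cancel_left₀ _ (hx t)]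
  have hback : γ / x (t + τ) = x t := by rw [← h t, mul_div_cancel_right₀ _ (hx (t + τ))]
  show x (t + τ) - γ / x (t + τ) = -(x t - γ / x t)
  rw [hback, hshift, neg_sub]

theorem Function.Antiperiodic.eq_zero_iff_of_even_of_injOn {f : ℝ → ℝ} {c : ℝ}
    (hf : Antiperiodic f c) (hc : 0 < c) (heven : f.Even) (hinj : InjOn f (Ioc 0 c)) {t : ℝ} (ht : 0 < t) :
    f t = 0 ↔ ∃ k : ℕ, t = (k + 1 / 2) * c := by
  have hhalf : f (c / 2) = 0 := by
    have h := hf (-(c / 2))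
    rw [heven, show -(c / 2) + c = c / 2 by ring] at h
    linarith
  constructor
  · intro h0
    obtain ⟨m, hm, -⟩ := existsUnique_sub_zsmul_mem_Ioc hc t 0
    rw [zero_add, zsmul_eq_mul] at hm
    have hs : f (t - m * c) = 0 := by rw [hf.sub_int_mul_eq, h0, mul_zero]
    have hsc : t - m * c = c / 2 :=
      hinj hm ⟨half_pos hc, half_le_self hc.le⟩ (hs.trans hhalf.symm)
    have hm0 : 0 ≤ m := by
      have : (-1 : ℝ) < m := by nlinarith [hm.1, hm.2]
      have : (-1 : ℤ) < m := by exact_mod_cast this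
      omega
    refine ⟨m.toNat, ?_⟩
    rw [show ((m.toNat : ℕ) : ℝ) = m by exact_mod_cast Int.toNat_of_nonneg hm0]
    linarith
  · rintro ⟨k, rfl⟩
    rw [show ((k : ℝ) + 1 / 2) * c = c / 2 + k * c by ring, hf.add_nat_mul_eq, hhalf, mul_zero]

def duffingField (c : ℝ) (p : ℝ × ℝ) : ℝ × ℝ := (p.2, c * p.1 - 2 * p.1 ^ 3)

lemma lipschitzOnWith_duffingField (c B : ℝ) :
    LipschitzOnWith (1 + |c| + 6 * B ^ 2).toNNReal (duffingField c) {p | |p.1| ≤ B} := by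
  rw [lipschitzOnWith_iff_dist_le_mul]
  intro p hp q hq
  rw [Real.coe_toNNReal _ (by positivity), Prod.dist_eq, Prod.dist_eq]
  simp only [duffingField, Real.dist_eq]
  set d := max |p.1 - q.1| |p.2 - q.2|
  have h1 : |p.1 - q.1| ≤ d := le_max_left _ _
  have h2 : |p.2 - q.2| ≤ d := le_max_right _ _
  have hcubic := abs_pow_three_sub_pow_three_le hp hq
  have hlin : |c * (p.1 - q.1)| ≤ |c| * d := by
    rw [abs_mul]; exact mul_le_mul_of_nonneg_left h1 (abs_nonneg c)
  have hd : 0 ≤ d := (abs_nonneg _).trans h1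
  refine max_le (by nlinarith [abs_nonneg c, sq_nonneg B]) ?_
  calc |c * p.1 - 2 * p.1 ^ 3 - (c * q.1 - 2 * q.1 ^ 3)|
      = |c * (p.1 - q.1) - 2 * (p.1 ^ 3 - q.1 ^ 3)| := by ring_nf
    _ ≤ |c * (p.1 - q.1)| + 2 * |p.1 ^ 3 - q.1 ^ 3| := by
      refine (abs_sub _ _).trans ?_
      rw [abs_mul, abs_mul, abs_two]
    _ ≤ (1 + |c| + 6 * B ^ 2) * d := by nlinarith [sq_nonneg B]

def IsDuffingSolution (c : ℝ) (f f' : ℝ → ℝ) : Prop :=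
  ∀ t, HasDerivAt f (f' t) t ∧ HasDerivAt f' (c * f t - 2 * f t ^ 3) t

namespace IsDuffingSolution

variable {c : ℝ} {f f' : ℝ → ℝ}

lemma of_contDiff (hf : ContDiff ℝ 2 f) (hf'' : ∀ t, deriv (deriv f) t = c * f t - 2 * f t ^ 3) :
    IsDuffingSolution c f (deriv f) := by
  have h2 : ContDiff ℝ (1 + 1) f := by exact_mod_cast hf
  have hd : Differentiable ℝ (deriv f) :=
    (contDiff_succ_iff_deriv.mp h2).2.2.differentiable (by norm_num)
  exact fun t => ⟨(hf.differentiable (by norm_num) t).hasDerivAt, hf'' t ▸ (hd t).hasDerivAt⟩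

lemma energy_eq (hf : IsDuffingSolution c f f') (s t : ℝ) :
    f' s ^ 2 + f s ^ 4 - c * f s ^ 2 = f' t ^ 2 + f t ^ 4 - c * f t ^ 2 := by
  have hE : ∀ t, HasDerivAt (fun u => f' u ^ 2 + f u ^ 4 - c * f u ^ 2) 0 t := fun t =>
    ((((hf t).2.pow 2).add ((hf t).1.pow 4)).sub (((hf t).1.pow 2).const_mul c)).congr_deriv
      (by ring)
  exact is_const_of_deriv_eq_zero (fun u => (hE u).differentiableAt) (fun u => (hE u).deriv) s t

lemma reflect (hf : IsDuffingSolution c f f') (t₁ : ℝ) :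
    IsDuffingSolution c (fun s => f (t₁ - s)) (fun s => -f' (t₁ - s)) := fun t =>
  have hr : HasDerivAt (fun s => t₁ - s) (-1) t := by simpa using (hasDerivAt_id t).const_sub t₁
  ⟨((hf _).1.comp t hr).congr_deriv (by ring), ((hf _).2.comp t hr).neg.congr_deriv (by ring)⟩

lemma comp_add_const (hf : IsDuffingSolution c f f') (τ : ℝ) :
    IsDuffingSolution c (fun s => f (s + τ)) (fun s => f' (s + τ)) := fun t =>
  ⟨(hf _).1.comp_add_const t τ, (hf _).2.comp_add_const t τ⟩

lemma inv (hf : IsDuffingSolution c f f') {γ : ℝ} (hf0 : ∀ t, f t ≠ 0)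
    (hE : ∀ t, f' t ^ 2 + f t ^ 4 - c * f t ^ 2 = -γ ^ 2) :
    IsDuffingSolution c (fun s => γ / f s) (fun s => -γ * f' s / f s ^ 2) := by
  intro t
  have hft := hf0 t
  refine ⟨((hasDerivAt_const t γ).fun_div (hf t).1 hft).congr_deriv (by ring), ?_⟩
  have hden : HasDerivAt (fun s => f s ^ 2) (2 * f t * f' t) t :=
    ((hf t).1.pow 2).congr_deriv (by ring)
  refine ((((hf t).2.const_mul (-γ)).fun_div hden (pow_ne_zero 2 hft))).congr_deriv ?_
  field_simp
  linear_combination (2 * γ) * hE t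

lemma eq_of_abs_le (hf : IsDuffingSolution c f f') {g g' : ℝ → ℝ} (hg : IsDuffingSolution c g g')
    {B : ℝ} (hfB : ∀ t, |f t| ≤ B) (hgB : ∀ t, |g t| ≤ B) {t₀ : ℝ}
    (h₀ : f t₀ = g t₀) (h₀' : f' t₀ = g' t₀) : f = g := by
  have h := ODE_solution_unique_univ (v := fun _ => duffingField c) (s := fun _ => {p | |p.1| ≤ B})
    (f := fun t => (f t, f' t)) (g := fun t => (g t, g' t)) (t₀ := t₀)
    (fun _ => lipschitzOnWith_duffingField c B)
    (fun t => ⟨(hf t).1.prodMk (hf t).2, hfB t⟩) (fun t => ⟨(hg t).1.prodMk (hg t).2, hgB t⟩)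
    (Prod.ext h₀ h₀')
  exact funext fun t => congrArg Prod.fst (congrFun h t)

end IsDuffingSolution

-- `a * (1 + a)` is the paper's `γ`; `x'` stands for the derivative of `x`.
structure IsNodaryProfile (a : ℝ) (x x' : ℝ → ℝ) : Prop where
  sol : IsDuffingSolution (1 + 2 * (a * (1 + a))) x x'
  pos : ∀ t, 0 < x t
  init : x 0 = 1 + a
  init_deriv : x' 0 = 0

namespace IsNodaryProfile

variable {a τ : ℝ} {x x' : ℝ → ℝ}

lemma energy (hx : IsNodaryProfile a x x') (t : ℝ) :
    x' t ^ 2 + x t ^ 4 - (1 + 2 * (a * (1 + a))) * x t ^ 2 = -(a * (1 + a)) ^ 2 := by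
  rw [hx.sol.energy_eq t 0, hx.init, hx.init_deriv]; ring

lemma deriv_sq (hx : IsNodaryProfile a x x') (t : ℝ) :
    x' t ^ 2 = (x t ^ 2 - a ^ 2) * ((1 + a) ^ 2 - x t ^ 2) := by
  linear_combination hx.energy t

lemma mem_Icc (hx : IsNodaryProfile a x x') (ha : 0 < a) (t : ℝ) : x t ∈ Icc a (1 + a) := by
  have hprod := (sq_nonneg (x' t)).trans_eq (hx.deriv_sq t)
  have hpos := hx.pos t
  constructor <;> by_contra! h
  · have h1 : x t ^ 2 < a ^ 2 := by nlinarith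
    have h2 : x t ^ 2 < (1 + a) ^ 2 := by nlinarith
    nlinarith [mul_pos (sub_pos.2 h1) (sub_pos.2 h2)]
  · have h1 : (1 + a) ^ 2 < x t ^ 2 := by nlinarith
    have h2 : a ^ 2 < x t ^ 2 := by nlinarith
    nlinarith [mul_pos (sub_pos.2 h2) (sub_pos.2 h1)]

lemma abs_le (hx : IsNodaryProfile a x x') (ha : 0 < a) (t : ℝ) : |x t| ≤ 1 + a := by
  rw [abs_of_pos (hx.pos t)]; exact (hx.mem_Icc ha t).2

lemma eq_of_isDuffingSolution (hx : IsNodaryProfile a x x') (ha : 0 < a) {g g' : ℝ → ℝ}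
    (hg : IsDuffingSolution (1 + 2 * (a * (1 + a))) g g') (hgB : ∀ t, |g t| ≤ 1 + a) {t₀ : ℝ}
    (h₀ : g t₀ = x t₀) (h₀' : g' t₀ = x' t₀) : g = x :=
  hg.eq_of_abs_le hx.sol hgB (hx.abs_le ha) h₀ h₀'

lemma even (hx : IsNodaryProfile a x x') (ha : 0 < a) : x.Even := fun t => by
  simpa using congrFun (hx.eq_of_isDuffingSolution ha (hx.sol.reflect 0) (fun _ => hx.abs_le ha _)
    (t₀ := 0) (by simp) (by simp [hx.init_deriv])) t

lemma periodic_of_deriv_eq_zero (hx : IsNodaryProfile a x x') (ha : 0 < a) {t₁ : ℝ}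
    (h : x' t₁ = 0) : Periodic x (2 * t₁) := by
  have hrefl := hx.eq_of_isDuffingSolution ha (hx.sol.reflect (2 * t₁))
    (fun _ => hx.abs_le ha _) (t₀ := t₁) (by ring_nf) (by ring_nf; simp [h])
  intro t
  rw [← congrFun hrefl (t + 2 * t₁), show 2 * t₁ - (t + 2 * t₁) = -t by ring, hx.even ha]

lemma deriv_ne_zero (hx : IsNodaryProfile a x x') (ha : 0 < a)
    (hmin : ∀ p, 0 < p → Periodic x p → 2 * τ ≤ p) : ∀ t ∈ Ioo 0 τ, x' t ≠ 0 := fun t ht h0 =>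
  (hmin _ (by linarith [ht.1]) (hx.periodic_of_deriv_eq_zero ha h0)).not_gt (by linarith [ht.2])

lemma deriv_half_period_eq_zero (hx : IsNodaryProfile a x x') (ha : 0 < a)
    (hper : Periodic x (2 * τ)) : x' τ = 0 := by
  have hsymm : (fun s => x (2 * τ - s)) = x := funext fun s => by
    rw [show 2 * τ - s = -s + 2 * τ by ring, hper, hx.even ha]
  have hτ : HasDerivAt x (-x' (2 * τ - τ)) τ := hsymm ▸ (hx.sol.reflect (2 * τ) τ).1
  rw [show 2 * τ - τ = τ by ring] at hτ
  linarith [hτ.unique (hx.sol τ).1]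

lemma injOn_Icc (hx : IsNodaryProfile a x x') (ha : 0 < a)
    (hmin : ∀ p, 0 < p → Periodic x p → 2 * τ ≤ p) : InjOn x (Icc 0 τ) :=
  injOn_Icc_of_hasDerivAt_ne_zero (fun t => (hx.sol t).1) (hx.deriv_ne_zero ha hmin)

lemma apply_half_period (hx : IsNodaryProfile a x x') (ha : 0 < a) (hτ : 0 < τ)
    (hper : Periodic x (2 * τ)) (hmin : ∀ p, 0 < p → Periodic x p → 2 * τ ≤ p) : x τ = a := by
  have hne : x τ ≠ 1 + a := fun h =>
    hτ.ne' (hx.injOn_Icc ha hmin ⟨hτ.le, le_rfl⟩ ⟨le_rfl, hτ.le⟩ (h.trans hx.init.symm))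
  have hprod : (x τ ^ 2 - a ^ 2) * ((1 + a) ^ 2 - x τ ^ 2) = 0 := by
    rw [← hx.deriv_sq, hx.deriv_half_period_eq_zero ha hper]; ring
  have hpos := hx.pos τ
  rcases mul_eq_zero.mp hprod with h | h
  · nlinarith
  · exact (hne (by nlinarith)).elim

lemma mul_add_half_period (hx : IsNodaryProfile a x x') (ha : 0 < a) (hτ : 0 < τ)
    (hper : Periodic x (2 * τ)) (hmin : ∀ p, 0 < p → Periodic x p → 2 * τ ≤ p) (t : ℝ) :
    x t * x (t + τ) = a * (1 + a) := by
  have hxτ := hx.apply_half_period ha hτ hper hmin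
  have hinv := (hx.sol.comp_add_const τ).inv (fun _ => (hx.pos _).ne') (fun _ => hx.energy _)
  have hbound : ∀ s, |a * (1 + a) / x (s + τ)| ≤ 1 + a := fun s => by
    have hxs := hx.mem_Icc ha (s + τ)
    rw [abs_of_pos (by have := hx.pos (s + τ); positivity), div_le_iff₀ (hx.pos _)]
    nlinarith [hxs.1]
  have h := hx.eq_of_isDuffingSolution ha hinv hbound (t₀ := 0)
    (by rw [zero_add, hxτ, hx.init]; field_simp)
    (by rw [zero_add, hx.deriv_half_period_eq_zero ha hper, hx.init_deriv]; ring)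
  rw [← congrFun h t, div_mul_cancel₀ _ (hx.pos _).ne']

end IsNodaryProfile

open Real

theorem nodary_wa1_zero_set_general (a γ τ : ℝ) (x z : ℝ → ℝ)
    (ha : 0 < a) (hγ : γ = a * (1 + a))
    (hx : ContDiff ℝ 2 x) (hxpos : ∀ t, 0 < x t)
    (hode : ∀ t, deriv (deriv x) t = (1 + 2 * γ) * x t - 2 * (x t) ^ 3)
    (hx0 : x 0 = 1 + a) (hx'0 : deriv x 0 = 0)
    (hz : ∀ t, deriv z t = (x t) ^ 2 - γ)
    (hτ : 0 < τ) (hper : Function.Periodic x (2 * τ))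
    (hτmin : ∀ p, 0 < p → Function.Periodic x p → 2 * τ ≤ p) :
    ∀ t, 0 < t → (deriv z t / x t = 0 ↔ ∃ k : ℕ, t = ((k : ℝ) + 1 / 2) * τ) := by
  subst hγ
  have hprof : IsNodaryProfile a x (deriv x) := ⟨.of_contDiff hx hode, hxpos, hx0, hx'0⟩
  have hw : ∀ t, deriv z t / x t = x t - a * (1 + a) / x t := fun t => by
    have := (hxpos t).ne'
    rw [hz]; field_simp
  have hanti := antiperiodic_sub_div_of_mul_add_eq (fun t => (hxpos t).ne')
    (hprof.mul_add_half_period ha hτ hper hτmin)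
  have heven : (fun t => x t - a * (1 + a) / x t).Even := fun t => by
    simp only [hprof.even ha t]
  have hinj : InjOn (fun t => x t - a * (1 + a) / x t) (Ioc 0 τ) :=
    ((strictMonoOn_sub_div (by positivity)).injOn.comp (hprof.injOn_Icc ha hτmin)
      fun t _ => hxpos t).mono Ioc_subset_Icc_self
  intro t ht
  rw [hw]
  exact hanti.eq_zero_iff_of_even_of_injOn hτ heven hinj ht

/-- For the nodary case `a > 0`, the zero set of `w_{a,1} = z_a'/x_a` on `(0,∞)`
is exactly `{(k + 1/2)·τ_a : k ∈ ℕ}`, where `2τ_a` is the fundamental period of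
`x_a`. -/
theorem nodary_wa1_zero_set (a γ τ : ℝ) (x z : ℝ → ℝ)
    (ha : 0 < a) (hγ : γ = a * (1 + a))
    (hx : ContDiff ℝ 2 x) (hxpos : ∀ t, 0 < x t)
    (hode : ∀ t, deriv (deriv x) t = (1 + 2 * γ) * x t - 2 * (x t) ^ 3)
    (hx0 : x 0 = 1 + a) (hx'0 : deriv x 0 = 0)
    (hz : ∀ t, deriv z t = (x t) ^ 2 - γ) (hz0 : z 0 = 0)
    (hτ : 0 < τ) (hper : Function.Periodic x (2 * τ))
    (hτmin : ∀ p, 0 < p → Function.Periodic x p → 2 * τ ≤ p) :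
    ∀ t, 0 < t → (deriv z t / x t = 0 ↔ ∃ k : ℕ, t = ((k : ℝ) + 1 / 2) * τ) :=
  nodary_wa1_zero_set_general a γ τ x z ha hγ hx hxpos hode hx0 hx'0 hz hτ hper hτmin
end

section
/- Fix a ∈ (-1,0) ∪ (0,∞), γ = a(1+a), and j ∈ ℕ with j² < 4|γ|. Let w be the even solution of w'' = (j² − 2p_a)w with w(0) = (−1)^{j+1}, w'(0) = 0, where p_a = x_a² + γ²/x_a² is even and τ_a-periodic with (1/τ_a)∫₀^{τ_a} p_a ≥ 2|γ|. Then there exists T > 0 with w(T) = 0. -/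
/-!
Since `x_a² + γ²/x_a² ≥ 2|γ|` by AM-GM, the hypothesis `j² < 4|γ|` makes the coefficient
`q = j² − 2p_a` negative everywhere, not only on average. If `w` kept the sign of `w(0)` on
`[0, ∞)`, then `w'' = q w` would have the opposite sign there, so `±w` would be positive and
strictly concave with `w'(0) = 0`. Its tangent line at `t = 1` then has negative slope and reaches
zero in finite time, while `±w` stays below that line: a contradiction.
-/

open Set

theorem two_mul_abs_le_sq_add_sq_div_sq (γ : ℝ) {u : ℝ} (hu : u ≠ 0) :
    2 * |γ| ≤ u ^ 2 + γ ^ 2 / u ^ 2 := by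
  have key : 2 * |γ| ≤ u ^ 2 + (|γ| / u) ^ 2 := by
    simpa [mul_assoc, mul_div_cancel₀ _ hu] using two_mul_le_add_sq u (|γ| / u)
  rwa [div_pow, sq_abs] at key

theorem pos_of_forall_ne_zero_of_pos_zero {f : ℝ → ℝ} (hf : Continuous f) (h0 : 0 < f 0)
    (hne : ∀ t > 0, f t ≠ 0) {t : ℝ} (ht : 0 ≤ t) : 0 < f t := by
  by_contra! hle
  obtain ⟨s, hs, hfs⟩ := intermediate_value_Icc' ht hf.continuousOn ⟨hle, h0.le⟩
  rcases hs.1.eq_or_lt with rfl | hs0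
  · exact h0.ne' hfs
  · exact hne s hs0 hfs

theorem exists_pos_zero_of_deriv_deriv_eq_mul_of_pos {f q : ℝ → ℝ} (hf : ContDiff ℝ 2 f)
    (hq : ∀ t, 0 ≤ t → q t < 0) (hode : ∀ t, deriv (deriv f) t = q t * f t)
    (h0 : 0 < f 0) (h'0 : deriv f 0 ≤ 0) : ∃ T > 0, f T = 0 := by
  by_contra! hne
  have hpos : ∀ t, 0 ≤ t → 0 < f t := fun _ =>
    pos_of_forall_ne_zero_of_pos_zero hf.continuous h0 hne
  have hdf : Differentiable ℝ f := hf.differentiable two_ne_zero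
  have hddf : Differentiable ℝ (deriv f) := hf.differentiable_deriv_two
  have hdd_neg : ∀ t, 0 ≤ t → deriv (deriv f) t < 0 := fun t ht => by
    rw [hode]; exact mul_neg_of_neg_of_pos (hq t ht) (hpos t ht)
  have hconc : ConcaveOn ℝ (Ici 0) f :=
    concaveOn_of_deriv2_nonpos' (convex_Ici 0) hdf.differentiableOn hddf.differentiableOn
      fun t ht => (hdd_neg t ht).le
  have hslope : deriv f 1 < 0 := by
    have hanti : StrictAntiOn (deriv f) (Ici 0) :=
      strictAntiOn_of_deriv_neg (convex_Ici 0) hddf.continuous.continuousOn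
        fun t ht => hdd_neg t (interior_subset ht)
    linarith [hanti (mem_Ici.2 le_rfl) (mem_Ici.2 zero_le_one) one_pos]
  set T := 1 - f 1 / deriv f 1
  have hT : 1 < T := by
    have : f 1 / deriv f 1 < 0 := div_neg_of_pos_of_neg (hpos 1 zero_le_one) hslope
    linarith
  have htangent := hconc.slope_le_deriv (mem_Ici.2 zero_le_one)
    (mem_Ici.2 (by linarith)) hT (hdf 1)
  rw [slope_def_field, div_le_iff₀ (by linarith)] at htangent
  have hT_root : deriv f 1 * (T - 1) = -f 1 := by
    rw [show T - 1 = -(f 1 / deriv f 1) by ring, mul_neg, mul_div_cancel₀ _ hslope.ne]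
  linarith [hpos T (by linarith)]

theorem exists_pos_zero_of_deriv_deriv_eq_mul {f q : ℝ → ℝ} (hf : ContDiff ℝ 2 f)
    (hq : ∀ t, 0 ≤ t → q t < 0) (hode : ∀ t, deriv (deriv f) t = q t * f t)
    (h0 : f 0 ≠ 0) (h'0 : deriv f 0 = 0) : ∃ T > 0, f T = 0 := by
  rcases h0.lt_or_gt with hneg | hpos
  · obtain ⟨T, hT, hfT⟩ := exists_pos_zero_of_deriv_deriv_eq_mul_of_pos (f := -f) hf.neg hq
      (fun t => by simp [deriv.neg', hode]) (by simpa using hneg) (by simp [deriv.neg', h'0])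
    exact ⟨T, hT, neg_eq_zero.mp hfT⟩
  · exact exists_pos_zero_of_deriv_deriv_eq_mul_of_pos hf hq hode hpos h'0.le

theorem mode_j_has_zero_general (γ : ℝ) (j : ℕ) (x w : ℝ → ℝ)
    (hj : (j : ℝ) ^ 2 < 4 * |γ|)
    (hxpos : ∀ t, 0 < x t)
    (hw : ContDiff ℝ 2 w)
    (hwode : ∀ t, deriv (deriv w) t
      = ((j : ℝ) ^ 2 - 2 * ((x t) ^ 2 + γ ^ 2 / (x t) ^ 2)) * w t)
    (hw0 : w 0 = (-1 : ℝ) ^ (j + 1)) (hw'0 : deriv w 0 = 0) :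
    ∃ T > 0, w T = 0 := by
  refine exists_pos_zero_of_deriv_deriv_eq_mul hw (fun t _ => ?_) hwode
    (by rw [hw0]; exact pow_ne_zero _ (by norm_num)) hw'0
  linarith [two_mul_abs_le_sq_add_sq_div_sq γ (hxpos t).ne']

/-- If `j² < 4|γ|`, the even solution of `w'' = (j² − 2 p_a) w` with
`w(0) = (−1)^{j+1}`, `w'(0) = 0` must vanish at some `T > 0`. -/
theorem mode_j_has_zero (a γ τ : ℝ) (j : ℕ) (x w : ℝ → ℝ)
    (ha : a ∈ Set.Ioo (-1 : ℝ) 0 ∪ Set.Ioi (0 : ℝ)) (hγ : γ = a * (1 + a))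
    (hj : (j : ℝ) ^ 2 < 4 * |γ|)
    (hτ : 0 < τ)
    (hx : ContDiff ℝ 2 x) (hxpos : ∀ t, 0 < x t)
    (hode : ∀ t, deriv (deriv x) t = (1 + 2 * γ) * x t - 2 * (x t) ^ 3)
    (hx0 : x 0 = 1 + a) (hx'0 : deriv x 0 = 0)
    (hpeven : ∀ t, (x (-t)) ^ 2 + γ ^ 2 / (x (-t)) ^ 2 = (x t) ^ 2 + γ ^ 2 / (x t) ^ 2)
    (hpper : ∀ t, (x (t + τ)) ^ 2 + γ ^ 2 / (x (t + τ)) ^ 2 = (x t) ^ 2 + γ ^ 2 / (x t) ^ 2)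
    (hmean : (1 / τ) * ∫ t in (0:ℝ)..τ, ((x t) ^ 2 + γ ^ 2 / (x t) ^ 2) ≥ 2 * |γ|)
    (hw : ContDiff ℝ 2 w) (hweven : ∀ t, w (-t) = w t)
    (hwode : ∀ t, deriv (deriv w) t
      = ((j : ℝ) ^ 2 - 2 * ((x t) ^ 2 + γ ^ 2 / (x t) ^ 2)) * w t)
    (hw0 : w 0 = (-1 : ℝ) ^ (j + 1)) (hw'0 : deriv w 0 = 0) :
    ∃ T > 0, w T = 0 :=
  mode_j_has_zero_general γ j x w hj hxpos hw hwode hw0 hw'0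
end

section
/- Let a ∈ (-1,0) ∪ (0,∞), T > 0, and suppose the even solution w of w'' = −2p_a·w with w(0) = −1, w'(0) = 0 satisfies w(T) ≠ 0. Then for every continuous even g : [-T,T] → ℝ there exists a unique φ ∈ C²([-T,T]) which is even, satisfies φ(±T) = 0, and solves φ'' + 2p_a·φ = 2x_a²·g on [-T,T]. -/
/-!
The equation is the linear problem `φ'' = q φ + h` with `q = -2 p_a` and `h = 2 x_a² g`, both
continuous and even: `x_a` is even because `x_a(t) - x_a(-t)` solves a linear equation with zero
Cauchy data at `0`. A linear equation has global solutions, since on any interval some iterate of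
the Picard map is a contraction. Symmetrising one gives an even solution, and subtracting the
right multiple of `w` makes it vanish at `±T`. Two even solutions differ by an even homogeneous
solution `δ`; as `δ'(0) = 0`, it is `-δ(0) w`, and `δ(T) = 0`, `w(T) ≠ 0` force `δ = 0`.
-/

open Set Function MeasureTheory intervalIntegral ODE
open scoped NNReal Topology

section PicardIteration

open scoped Nat

variable {E : Type*} [NormedAddCommGroup E] [NormedSpace ℝ E]
  {f : ℝ → E → E} {a b t₀ : ℝ} {K : ℝ≥0}

lemma continuous_picard (hf : Continuous (uncurry f)) {γ : ℝ → E} (hγ : Continuous γ)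
    (t₀ : ℝ) (x₀ : E) : Continuous (picard f t₀ x₀ γ) :=
  continuous_const.add <| continuous_primitive
    (fun _ _ ↦ (hf.comp (continuous_id.prodMk hγ)).intervalIntegrable _ _) t₀

noncomputable def picardIcc (hf : Continuous (uncurry f)) (hab : a ≤ b) (t₀ : ℝ) (x₀ : E)
    (α : C(Icc a b, E)) : C(Icc a b, E) where
  toFun t := picard f t₀ x₀ (IccExtend hab α) t
  continuous_toFun :=
    (continuous_picard hf (continuous_IccExtend_iff.mpr α.continuous) t₀ x₀).comp
      continuous_subtype_val

lemma dist_iterate_picardIcc_apply_le (hf : Continuous (uncurry f))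
    (hK : ∀ t ∈ Icc a b, LipschitzWith K (f t)) (hab : a ≤ b) (ht₀ : t₀ ∈ Icc a b) (x₀ : E)
    (α β : C(Icc a b, E)) (n : ℕ) (t : Icc a b) :
    dist ((picardIcc hf hab t₀ x₀)^[n] α t) ((picardIcc hf hab t₀ x₀)^[n] β t) ≤
      (K * |t.1 - t₀|) ^ n / n ! * dist α β := by
  induction n generalizing t with
  | zero => simpa using α.dist_apply_le_dist (g := β) t
  | succ n ih =>
    set P := picardIcc hf hab t₀ x₀
    have hint (γ : C(Icc a b, E)) :
        IntervalIntegrable (fun τ ↦ f τ (IccExtend hab γ τ)) volume t₀ t :=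
      (hf.comp (continuous_id.prodMk (continuous_IccExtend_iff.mpr γ.continuous)))
        |>.intervalIntegrable _ _
    rw [iterate_succ_apply', iterate_succ_apply', dist_eq_norm]
    change ‖picard f t₀ x₀ _ t - picard f t₀ x₀ _ t‖ ≤ _
    rw [picard_apply, picard_apply, add_sub_add_left_eq_sub, ← integral_sub (hint _) (hint _)]
    calc
      _ ≤ ∫ τ in uIoc t₀ t, K ^ (n + 1) * |τ - t₀| ^ n / n ! * dist α β := by
        rw [norm_intervalIntegral_eq]
        apply MeasureTheory.norm_integral_le_of_norm_le
          (Continuous.integrableOn_uIoc (by fun_prop))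
        refine ae_restrict_mem measurableSet_Ioc |>.mono fun τ hτ ↦ ?_
        have hτ : τ ∈ Icc a b := uIoc_subset_uIcc.trans (uIcc_subset_Icc ht₀ t.2) hτ
        rw [← dist_eq_norm, IccExtend_of_mem _ _ hτ, IccExtend_of_mem _ _ hτ]
        calc _ ≤ K * dist (P^[n] α ⟨τ, hτ⟩) (P^[n] β ⟨τ, hτ⟩) := (hK τ hτ).dist_le_mul _ _
          _ ≤ K * ((K * |τ - t₀|) ^ n / n ! * dist α β) := by gcongr; exact ih _
          _ = _ := by ring
      _ = K ^ (n + 1) / n ! * dist α β * ∫ τ in uIoc t₀ t, |τ - t₀| ^ n := by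
        rw [← MeasureTheory.integral_const_mul]
        congr 1 with τ
        ring
      _ = (K * |t.1 - t₀|) ^ (n + 1) / (n + 1) ! * dist α β := by
        rw [integral_pow_abs_sub_uIoc, Nat.factorial_succ]
        push_cast
        field_simp
        ring

lemma exists_isFixedPt_picardIcc [CompleteSpace E] (hf : Continuous (uncurry f))
    (hK : ∀ t ∈ Icc a b, LipschitzWith K (f t)) (hab : a ≤ b) (ht₀ : t₀ ∈ Icc a b) (x₀ : E) :
    ∃ α, IsFixedPt (picardIcc hf hab t₀ x₀) α := by
  obtain ⟨n, hn⟩ := FloorSemiring.tendsto_pow_div_factorial_atTop (K * (b - a))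
    |>.eventually (gt_mem_nhds zero_lt_one) |>.exists
  have hKab : 0 ≤ (K : ℝ) * (b - a) := mul_nonneg K.2 (sub_nonneg.mpr hab)
  have hC : 0 ≤ (K * (b - a)) ^ n / (n ! : ℝ) := div_nonneg (pow_nonneg hKab n) n !.cast_nonneg
  have hP : ContractingWith ⟨_, hC⟩ (picardIcc hf hab t₀ x₀)^[n] := by
    refine ⟨hn, LipschitzWith.of_dist_le_mul fun α β ↦ ?_⟩
    refine (ContinuousMap.dist_le (mul_nonneg hC dist_nonneg)).mpr fun t ↦ ?_
    refine (dist_iterate_picardIcc_apply_le hf hK hab ht₀ x₀ α β n t).trans ?_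
    change _ ≤ (K * (b - a)) ^ n / n ! * dist α β
    have : |t.1 - t₀| ≤ b - a := Real.dist_le_of_mem_Icc t.2 ht₀
    gcongr
  exact ⟨_, hP.isFixedPt_fixedPoint_iterate⟩

/-- Unlike `IsPicardLindelof`, no smallness of the interval is needed: with `f t` Lipschitz on all
of `E` there is no ball to stay in, and some iterate of the Picard map contracts. -/
theorem exists_hasDerivWithinAt_Icc_of_lipschitzWith [CompleteSpace E]
    (hf : Continuous (uncurry f)) (hK : ∀ t ∈ Icc a b, LipschitzWith K (f t))
    (ht₀ : t₀ ∈ Icc a b) (x₀ : E) :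
    ∃ γ : ℝ → E, γ t₀ = x₀ ∧ ∀ t ∈ Icc a b, HasDerivWithinAt γ (f t (γ t)) (Icc a b) t := by
  have hab : a ≤ b := ht₀.1.trans ht₀.2
  obtain ⟨α, hα⟩ := exists_isFixedPt_picardIcc hf hK hab ht₀ x₀
  have hγ : ∀ t ∈ Icc a b, IccExtend hab α t = picard f t₀ x₀ (IccExtend hab α) t := by
    intro t ht
    rw [IccExtend_of_mem _ _ ht]
    exact (DFunLike.congr_fun hα ⟨t, ht⟩).symm
  refine ⟨IccExtend hab α, by simpa using hγ t₀ ht₀, fun t ht ↦ ?_⟩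
  exact (hasDerivWithinAt_picard_Icc ht₀ (u := univ) hf.continuousOn
    (continuous_IccExtend_iff.mpr α.continuous).continuousOn (fun _ _ ↦ mem_univ _) x₀ ht
    ).congr_of_mem hγ ht

theorem exists_hasDerivAt_of_lipschitzWith [CompleteSpace E] (hf : Continuous (uncurry f))
    (hK : ∀ c : ℝ, ∃ K : ℝ≥0, ∀ t ∈ Icc (t₀ - c) (t₀ + c), LipschitzWith K (f t)) (x₀ : E) :
    ∃ γ : ℝ → E, γ t₀ = x₀ ∧ ∀ t, HasDerivAt γ (f t (γ t)) t := by
  choose K hK using hK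
  choose γ hγ₀ hγ using fun n : ℕ ↦ exists_hasDerivWithinAt_Icc_of_lipschitzWith hf (hK n)
    (t₀ := t₀) ⟨by linarith [n.cast_nonneg (α := ℝ)], by linarith [n.cast_nonneg (α := ℝ)]⟩ x₀
  have hγ' : ∀ (n : ℕ) t, |t - t₀| < n → HasDerivAt (γ n) (f t (γ n t)) t := fun n t ht ↦ by
    rw [abs_sub_lt_iff] at ht
    exact (hγ n t ⟨by linarith, by linarith⟩).hasDerivAt
      (Icc_mem_nhds (by linarith) (by linarith))
  have hcompat : ∀ (m n : ℕ) t, |t - t₀| < m → |t - t₀| < n → γ m t = γ n t := by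
    intro m n t hm hn
    set c : ℝ := min m n
    have htc : |t - t₀| < c := lt_min hm hn
    have hc : 0 < c := (abs_nonneg _).trans_lt htc
    have hIoo : ∀ τ ∈ Ioo (t₀ - c) (t₀ + c), |τ - t₀| < m ∧ |τ - t₀| < n := fun τ hτ ↦
      lt_min_iff.mp (abs_sub_lt_iff.mpr ⟨by linarith [hτ.2], by linarith [hτ.1]⟩)
    rw [abs_sub_lt_iff] at htc
    exact ODE_solution_unique_of_mem_Ioo (s := fun _ ↦ univ)
      (fun τ hτ ↦ (hK c τ (Ioo_subset_Icc_self hτ)).lipschitzOnWith)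
      (t₀ := t₀) ⟨by linarith, by linarith⟩
      (fun τ hτ ↦ ⟨hγ' m τ (hIoo τ hτ).1, mem_univ _⟩)
      (fun τ hτ ↦ ⟨hγ' n τ (hIoo τ hτ).2, mem_univ _⟩)
      ((hγ₀ m).trans (hγ₀ n).symm) ⟨by linarith, by linarith⟩
  set N : ℝ → ℕ := fun t ↦ ⌈|t - t₀|⌉₊ + 1
  have hN : ∀ t, |t - t₀| < N t := fun t ↦ (Nat.le_ceil _).trans_lt (by simp [N])
  refine ⟨fun t ↦ γ (N t) t, hγ₀ _, fun t ↦ ?_⟩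
  refine (hγ' (N t) t (hN t)).congr_of_eventuallyEq ?_
  have hnhds : {τ | |τ - t₀| < N t} ∈ 𝓝 t :=
    (isOpen_lt (by fun_prop) continuous_const).mem_nhds (hN t)
  filter_upwards [hnhds] with τ hτ using hcompat _ _ τ (hN τ) hτ

end PicardIteration

section Calculus

variable {F : Type*} [NormedAddCommGroup F] [NormedSpace ℝ F]

lemma contDiff_two_iff_deriv {f : ℝ → F} :
    ContDiff ℝ 2 f ↔ Differentiable ℝ f ∧ Differentiable ℝ (deriv f) ∧
      Continuous (deriv (deriv f)) := by
  rw [show (2 : WithTop ℕ∞) = 1 + 1 from rfl, contDiff_succ_iff_deriv, contDiff_one_iff_deriv]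
  simp

lemma ContDiff.hasDerivAt_deriv_deriv {f : ℝ → F} (hf : ContDiff ℝ 2 f) (t : ℝ) :
    HasDerivAt f (deriv f t) t ∧ HasDerivAt (deriv f) (deriv (deriv f) t) t :=
  ⟨(hf.differentiable two_ne_zero t).hasDerivAt, (hf.differentiable_deriv_two t).hasDerivAt⟩

lemma contDiff_two_of_hasDerivAt {f f' f'' : ℝ → F} (hf : ∀ t, HasDerivAt f (f' t) t)
    (hf' : ∀ t, HasDerivAt f' (f'' t) t) (hf'' : Continuous f'') :
    ContDiff ℝ 2 f ∧ deriv (deriv f) = f'' := by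
  have h₁ : deriv f = f' := funext fun t ↦ (hf t).deriv
  have h₂ : deriv f' = f'' := funext fun t ↦ (hf' t).deriv
  refine ⟨contDiff_two_iff_deriv.mpr ⟨fun t ↦ (hf t).differentiableAt, ?_, ?_⟩, by rw [h₁, h₂]⟩
  · rw [h₁]; exact fun t ↦ (hf' t).differentiableAt
  · rwa [h₁, h₂]

lemma HasDerivAt.comp_neg {f : ℝ → F} {f' : F} {t : ℝ} (hf : HasDerivAt f f' (-t)) :
    HasDerivAt (fun s ↦ f (-s)) (-f') t := by
  simpa [Function.comp_def] using hf.scomp t (hasDerivAt_neg t)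

lemma Function.Even.deriv_zero {f : ℝ → F} (hf : Function.Even f) : deriv f 0 = 0 := by
  have := deriv_comp_neg f (x := 0)
  rw [show (fun x ↦ f (-x)) = f from funext hf, neg_zero] at this
  have h₂ : (2 : ℝ) • deriv f 0 = 0 := by rw [two_smul]; nth_rw 1 [this]; exact neg_add_cancel _
  exact (smul_eq_zero.mp h₂).resolve_left two_ne_zero

end Calculus

section SecondOrder

variable {q h : ℝ → ℝ}

/-- `y'' = q y + h` as the first-order system `(y, y')' = (y', q y + h)`. -/
def secondOrderField (q h : ℝ → ℝ) (t : ℝ) (y : ℝ × ℝ) : ℝ × ℝ := (y.2, q t * y.1 + h t)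

lemma lipschitzWith_secondOrderField (h : ℝ → ℝ) {t : ℝ} {C : ℝ≥0} (hC : ‖q t‖₊ ≤ C) :
    LipschitzWith (max 1 C) (secondOrderField q h t) := by
  have := (LipschitzWith.prod_snd (α := ℝ) (β := ℝ)).prodMk
    (((lipschitzWith_smul (q t)).comp (LipschitzWith.prod_fst (α := ℝ) (β := ℝ))).add
      (LipschitzWith.const (h t)))
  exact this.weaken (max_le_max le_rfl (by simpa using hC))

lemma exists_lipschitzWith_secondOrderField (hq : Continuous q) (h : ℝ → ℝ) (a b : ℝ) :
    ∃ K, ∀ t ∈ Icc a b, LipschitzWith K (secondOrderField q h t) := by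
  obtain ⟨C, hC⟩ := isCompact_Icc.exists_bound_of_continuousOn hq.continuousOn
  exact ⟨_, fun t ht ↦ lipschitzWith_secondOrderField h (C := C.toNNReal)
    (by rw [← NNReal.coe_le_coe, coe_nnnorm]; exact (hC t ht).trans (Real.le_coe_toNNReal C))⟩

theorem exists_hasDerivAt_secondOrder (hq : Continuous q) (hh : Continuous h) :
    ∃ y y' : ℝ → ℝ, (∀ t, HasDerivAt y (y' t) t) ∧ ∀ t, HasDerivAt y' (q t * y t + h t) t := by
  obtain ⟨γ, -, hγ⟩ := exists_hasDerivAt_of_lipschitzWith (t₀ := 0)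
    (show Continuous fun p : ℝ × ℝ × ℝ ↦ (p.2.2, q p.1 * p.2.1 + h p.1) by fun_prop)
    (fun c ↦ exists_lipschitzWith_secondOrderField hq h _ _) 0
  exact ⟨fun t ↦ (γ t).1, fun t ↦ (γ t).2, fun t ↦ (hγ t).fst, fun t ↦ (hγ t).snd⟩

theorem eqOn_zero_of_hasDerivAt_secondOrder (hq : Continuous q) {a b t₀ : ℝ}
    (ht₀ : t₀ ∈ Ioo a b) {y y' : ℝ → ℝ} (hy : ∀ t ∈ Ioo a b, HasDerivAt y (y' t) t)
    (hy' : ∀ t ∈ Ioo a b, HasDerivAt y' (q t * y t) t) (h₀ : y t₀ = 0) (h₀' : y' t₀ = 0) :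
    EqOn y 0 (Ioo a b) := by
  obtain ⟨K, hK⟩ := exists_lipschitzWith_secondOrderField hq 0 a b
  have := ODE_solution_unique_of_mem_Ioo (s := fun _ ↦ univ) (g := fun _ ↦ 0)
    (fun t ht ↦ (hK t (Ioo_subset_Icc_self ht)).lipschitzOnWith) ht₀
    (fun t ht ↦ ⟨by simpa [secondOrderField] using (hy t ht).prodMk (hy' t ht), mem_univ _⟩)
    (fun t _ ↦ ⟨by simpa [secondOrderField, Prod.mk_zero_zero] using
      hasDerivAt_const t (0 : ℝ × ℝ), mem_univ _⟩)
    (by simp [h₀, h₀'])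
  exact fun t ht ↦ congrArg Prod.fst (this ht)

theorem exists_even_hasDerivAt_secondOrder (hq : Continuous q) (hh : Continuous h)
    (hqe : Function.Even q) (hhe : Function.Even h) :
    ∃ y y' : ℝ → ℝ, Function.Even y ∧ (∀ t, HasDerivAt y (y' t) t) ∧
      ∀ t, HasDerivAt y' (q t * y t + h t) t := by
  obtain ⟨y, y', hy, hy'⟩ := exists_hasDerivAt_secondOrder hq hh
  refine ⟨fun t ↦ (y t + y (-t)) / 2, fun t ↦ (y' t - y' (-t)) / 2, fun t ↦ by simp [add_comm],
    fun t ↦ ?_, fun t ↦ ?_⟩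
  · exact (((hy t).add (hy (-t)).comp_neg).div_const 2).congr_deriv (by ring)
  · refine (((hy' t).sub (hy' (-t)).comp_neg).div_const 2).congr_deriv ?_
    rw [hqe t, hhe t]
    ring

theorem exists_even_secondOrder_solution_eq_zero (hq : Continuous q) (hh : Continuous h)
    (hqe : Function.Even q) (hhe : Function.Even h) {w : ℝ → ℝ} (hw : ContDiff ℝ 2 w)
    (hwe : Function.Even w) (hwode : ∀ t, deriv (deriv w) t = q t * w t) {T : ℝ}
    (hwT : w T ≠ 0) :
    ∃ φ : ℝ → ℝ, ContDiff ℝ 2 φ ∧ Function.Even φ ∧ φ T = 0 ∧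
      ∀ t, deriv (deriv φ) t = q t * φ t + h t := by
  obtain ⟨y, y', hye, hy, hy'⟩ := exists_even_hasDerivAt_secondOrder hq hh hqe hhe
  set c := y T / w T
  have hφ := contDiff_two_of_hasDerivAt (f := fun t ↦ y t - c * w t)
    (f' := fun t ↦ y' t - c * deriv w t) (f'' := fun t ↦ q t * (y t - c * w t) + h t)
    (fun t ↦ (hy t).sub ((hw.hasDerivAt_deriv_deriv t).1.const_mul c))
    (fun t ↦ ((hy' t).sub ((hw.hasDerivAt_deriv_deriv t).2.const_mul c)).congr_deriv
      (by rw [hwode]; ring))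
    (by
      have := hw.continuous
      have : Continuous y := Differentiable.continuous fun t ↦ (hy t).differentiableAt
      fun_prop)
  refine ⟨_, hφ.1, fun t ↦ by simp only [hye t, hwe t], by simp [c, hwT], fun t ↦ by rw [hφ.2]⟩

theorem eqOn_Icc_of_even_secondOrder_solutions (hq : Continuous q) {T : ℝ} (hT : 0 < T)
    {w : ℝ → ℝ} (hw : ContDiff ℝ 2 w) (hwode : ∀ t ∈ Ioo (-T) T, deriv (deriv w) t = q t * w t)
    (hw₀ : w 0 ≠ 0) (hw₀' : deriv w 0 = 0) (hwT : w T ≠ 0) {φ ψ : ℝ → ℝ}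
    (hφ : ContDiff ℝ 2 φ) (hψ : ContDiff ℝ 2 ψ) (hφe : Function.Even φ)
    (hψe : Function.Even ψ)
    (hφode : ∀ t ∈ Icc (-T) T, deriv (deriv φ) t = q t * φ t + h t)
    (hψode : ∀ t ∈ Icc (-T) T, deriv (deriv ψ) t = q t * ψ t + h t) (hφψ : φ T = ψ T) :
    EqOn φ ψ (Icc (-T) T) := by
  set c := (φ 0 - ψ 0) / w 0
  set ε : ℝ → ℝ := fun t ↦ φ t - ψ t - c * w t
  have hε : EqOn ε 0 (Ioo (-T) T) := by
    refine eqOn_zero_of_hasDerivAt_secondOrder hq (t₀ := 0) ⟨by linarith, hT⟩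
      (y' := fun t ↦ deriv φ t - deriv ψ t - c * deriv w t)
      (fun t _ ↦ ((hφ.hasDerivAt_deriv_deriv t).1.sub (hψ.hasDerivAt_deriv_deriv t).1).sub
        ((hw.hasDerivAt_deriv_deriv t).1.const_mul c))
      (fun t ht ↦ (((hφ.hasDerivAt_deriv_deriv t).2.sub (hψ.hasDerivAt_deriv_deriv t).2).sub
        ((hw.hasDerivAt_deriv_deriv t).2.const_mul c)).congr_deriv ?_) ?_ ?_
    · rw [hφode t (Ioo_subset_Icc_self ht), hψode t (Ioo_subset_Icc_self ht), hwode t ht]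
      ring
    · simp [ε, c, hw₀]
    · simp [hφe.deriv_zero, hψe.deriv_zero, hw₀']
  have hεc : Continuous ε := by
    have := hφ.continuous; have := hψ.continuous; have := hw.continuous; fun_prop
  have hεIcc := hε.closure hεc continuous_const
  rw [closure_Ioo (by linarith)] at hεIcc
  have hc : c = 0 := by
    have := hεIcc (right_mem_Icc.mpr (by linarith))
    simp only [ε, hφψ, sub_self, zero_sub, Pi.zero_apply, neg_eq_zero, mul_eq_zero] at this
    exact this.resolve_right hwT
  intro t ht
  have := hεIcc ht
  simp only [ε, hc, zero_mul, sub_zero, Pi.zero_apply] at this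
  linarith

end SecondOrder

theorem even_of_deriv_deriv_eq_cubic {x : ℝ → ℝ} {k m : ℝ} (hx : ContDiff ℝ 2 x)
    (hode : ∀ t, deriv (deriv x) t = k * x t + m * x t ^ 3) (h₀ : deriv x 0 = 0) :
    Function.Even x := by
  intro t
  have hxc := hx.continuous
  have hx₁ s := (hx.hasDerivAt_deriv_deriv s).1
  have hx₂ s := (hx.hasDerivAt_deriv_deriv s).2
  -- the coefficient comes from `a³ - b³ = (a - b) (a² + a b + b²)`
  have key := eqOn_zero_of_hasDerivAt_secondOrder
    (q := fun s ↦ k + m * (x s ^ 2 + x s * x (-s) + x (-s) ^ 2)) (by fun_prop)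
    (a := -(|t| + 1)) (b := |t| + 1) (t₀ := 0) ⟨by linarith [abs_nonneg t], by positivity⟩
    (y := fun s ↦ x s - x (-s)) (y' := fun s ↦ deriv x s + deriv x (-s))
    (fun s _ ↦ ((hx₁ s).sub (hx₁ (-s)).comp_neg).congr_deriv (by ring))
    (fun s _ ↦ ((hx₂ s).add (hx₂ (-s)).comp_neg).congr_deriv (by rw [hode, hode]; ring))
    (by simp) (by simp [h₀])
  have := key (show t ∈ Ioo _ _ by constructor <;> cases abs_cases t <;> linarith)
  simp only [Pi.zero_apply, sub_eq_zero] at this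
  exact this.symm

theorem jacobi_dirichlet_solvable_general (γ T : ℝ) (x w g : ℝ → ℝ)
    (hT : 0 < T)
    (hx : ContDiff ℝ 2 x) (hxpos : ∀ t, 0 < x t)
    (hode : ∀ t, deriv (deriv x) t = (1 + 2 * γ) * x t - 2 * (x t) ^ 3)
    (hx'0 : deriv x 0 = 0)
    (hw : ContDiff ℝ 2 w) (hweven : ∀ t, w (-t) = w t)
    (hwode : ∀ t, deriv (deriv w) t = -2 * ((x t) ^ 2 + γ ^ 2 / (x t) ^ 2) * w t)
    (hw0 : w 0 = -1) (hw'0 : deriv w 0 = 0) (hwT : w T ≠ 0)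
    (hg : Continuous g) (hgeven : ∀ t, g (-t) = g t) :
    ∃ φ : ℝ → ℝ,
      (ContDiff ℝ 2 φ ∧ (∀ t, φ (-t) = φ t) ∧ φ T = 0 ∧ φ (-T) = 0 ∧
        ∀ t ∈ Set.Icc (-T) T,
          deriv (deriv φ) t + 2 * ((x t) ^ 2 + γ ^ 2 / (x t) ^ 2) * φ t
            = 2 * (x t) ^ 2 * g t) ∧
      ∀ ψ : ℝ → ℝ,
        (ContDiff ℝ 2 ψ ∧ (∀ t, ψ (-t) = ψ t) ∧ ψ T = 0 ∧ ψ (-T) = 0 ∧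
          ∀ t ∈ Set.Icc (-T) T,
            deriv (deriv ψ) t + 2 * ((x t) ^ 2 + γ ^ 2 / (x t) ^ 2) * ψ t
              = 2 * (x t) ^ 2 * g t) →
        ∀ t ∈ Set.Icc (-T) T, ψ t = φ t := by
  have hxe : Function.Even x := even_of_deriv_deriv_eq_cubic (k := 1 + 2 * γ) (m := -2) hx
    (fun t ↦ by rw [hode]; ring) hx'0
  have hxc := hx.continuous
  set q : ℝ → ℝ := fun t ↦ -2 * ((x t) ^ 2 + γ ^ 2 / (x t) ^ 2)
  have hq : Continuous q := continuous_const.mul <| (hxc.pow 2).add <|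
    continuous_const.div (hxc.pow 2) fun t ↦ (pow_pos (hxpos t) 2).ne'
  have hqe : Function.Even q := fun t ↦ by simp only [q, hxe t]
  have hhe : Function.Even fun t ↦ 2 * (x t) ^ 2 * g t := fun t ↦ by simp only [hxe t, hgeven t]
  obtain ⟨φ, hφ, hφe, hφT, hφode⟩ :=
    exists_even_secondOrder_solution_eq_zero hq (by fun_prop) hqe hhe hw hweven hwode hwT
  refine ⟨φ, ⟨hφ, hφe, hφT, (hφe T).trans hφT, fun t _ ↦ by rw [hφode]; ring⟩, ?_⟩
  rintro ψ ⟨hψ, hψe, hψT, -, hψode⟩ t ht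
  refine (eqOn_Icc_of_even_secondOrder_solutions hq hT hw (fun t _ ↦ hwode t)
    (by rw [hw0]; norm_num) hw'0 hwT hφ hψ hφe hψe (fun t _ ↦ hφode t) (fun t ht ↦ ?_)
    (hφT.trans hψT.symm) ht).symm
  linear_combination hψode t ht

/-- Solvability of the rotationally symmetric Jacobi problem: if the even
principal solution `w` of `w'' = −2 p_a w` satisfies `w(T) ≠ 0`, then for every
continuous even `g` there is a unique even `C²` function `φ` vanishing at `±T`
and solving `φ'' + 2 p_a φ = 2 x_a² g` on `[-T,T]`. -/
theorem jacobi_dirichlet_solvable (a γ T : ℝ) (x w g : ℝ → ℝ)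
    (ha : a ∈ Set.Ioo (-1 : ℝ) 0 ∪ Set.Ioi (0 : ℝ)) (hγ : γ = a * (1 + a))
    (hT : 0 < T)
    (hx : ContDiff ℝ 2 x) (hxpos : ∀ t, 0 < x t)
    (hode : ∀ t, deriv (deriv x) t = (1 + 2 * γ) * x t - 2 * (x t) ^ 3)
    (hx0 : x 0 = 1 + a) (hx'0 : deriv x 0 = 0)
    (hw : ContDiff ℝ 2 w) (hweven : ∀ t, w (-t) = w t)
    (hwode : ∀ t, deriv (deriv w) t = -2 * ((x t) ^ 2 + γ ^ 2 / (x t) ^ 2) * w t)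
    (hw0 : w 0 = -1) (hw'0 : deriv w 0 = 0) (hwT : w T ≠ 0)
    (hg : Continuous g) (hgeven : ∀ t, g (-t) = g t) :
    ∃ φ : ℝ → ℝ,
      (ContDiff ℝ 2 φ ∧ (∀ t, φ (-t) = φ t) ∧ φ T = 0 ∧ φ (-T) = 0 ∧
        ∀ t ∈ Set.Icc (-T) T,
          deriv (deriv φ) t + 2 * ((x t) ^ 2 + γ ^ 2 / (x t) ^ 2) * φ t
            = 2 * (x t) ^ 2 * g t) ∧
      ∀ ψ : ℝ → ℝ,
        (ContDiff ℝ 2 ψ ∧ (∀ t, ψ (-t) = ψ t) ∧ ψ T = 0 ∧ ψ (-T) = 0 ∧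
          ∀ t ∈ Set.Icc (-T) T,
            deriv (deriv ψ) t + 2 * ((x t) ^ 2 + γ ^ 2 / (x t) ^ 2) * ψ t
              = 2 * (x t) ^ 2 * g t) →
        ∀ t ∈ Set.Icc (-T) T, ψ t = φ t :=
  jacobi_dirichlet_solvable_general γ T x w g hT hx hxpos hode hx'0 hw hweven hwode hw0 hw'0 hwT hg
    hgeven
end
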